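/- Let y₁² = y₂² = 3/8. Then for every t ∈ ℝ, 8·E(t) = (2t² + 2t − 1)(11t⁴ + 22t³ + 9t² − 2t + 5); the quartic 11t⁴ + 22t³ + 9t² − 2t + 5 has no real root; and consequently E has exactly two real roots, namely (−1+√3)/2 and (−1−√3)/2. -/

import Mathlib

/-- The polynomial `E(t)` as a real-valued function. -/
def EFun (y₁ y₂ t : ℝ) : ℝ :=
  y₁^2 * (t^2 + 4*t + 1)^3 + y₂^2 * (t^2 - 2*t - 2)^3
    + 2*t^6 + 6*t^5 - 15*t^4 - 40*t^3 - 15*t^2 + 6*t + 2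

theorem eight_mul_EFun_of_sq_eq {y₁ y₂ : ℝ} (h1 : y₁^2 = 3/8) (h2 : y₂^2 = 3/8) (t : ℝ) :
    8 * EFun y₁ y₂ t = (2*t^2 + 2*t - 1) * (11*t^4 + 22*t^3 + 9*t^2 - 2*t + 5) := by
  rw [EFun, h1, h2]
  ring

/-- In `u = t² + t` the quartic is the quadratic `11u² − 2u + 5`, of negative discriminant. -/
theorem quartic_pos (t : ℝ) : 0 < 11*t^4 + 22*t^3 + 9*t^2 - 2*t + 5 := by
  have h : 11*t^4 + 22*t^3 + 9*t^2 - 2*t + 5 = 11 * ((t^2 + t) - 1/11)^2 + 54/11 := by ring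
  rw [h]
  positivity

theorem two_mul_sq_add_two_mul_sub_one_eq_zero_iff (t : ℝ) :
    2*t^2 + 2*t - 1 = 0 ↔ t = (-1 + Real.sqrt 3) / 2 ∨ t = (-1 - Real.sqrt 3) / 2 := by
  have hdiscrim : discrim (2 : ℝ) 2 (-1) = (2 * Real.sqrt 3) * (2 * Real.sqrt 3) := by
    rw [discrim, mul_mul_mul_comm, Real.mul_self_sqrt (by norm_num)]
    norm_num
  have hroots := quadratic_eq_zero_iff (by norm_num : (2 : ℝ) ≠ 0) hdiscrim t
  convert hroots using 2 <;> ring_nf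

theorem stmt_9 (y₁ y₂ : ℝ) (h1 : y₁^2 = 3/8) (h2 : y₂^2 = 3/8) :
    (∀ t : ℝ, 8 * EFun y₁ y₂ t
      = (2*t^2 + 2*t - 1) * (11*t^4 + 22*t^3 + 9*t^2 - 2*t + 5)) ∧
    (∀ t : ℝ, 11*t^4 + 22*t^3 + 9*t^2 - 2*t + 5 ≠ 0) ∧
    {t : ℝ | EFun y₁ y₂ t = 0}
      = {(-1 + Real.sqrt 3) / 2, (-1 - Real.sqrt 3) / 2} := by
  have hfac := eight_mul_EFun_of_sq_eq h1 h2
  have hquartic (t : ℝ) : 11*t^4 + 22*t^3 + 9*t^2 - 2*t + 5 ≠ 0 := (quartic_pos t).ne'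
  refine ⟨hfac, hquartic, Set.ext fun t => ?_⟩
  calc EFun y₁ y₂ t = 0
      ↔ (2*t^2 + 2*t - 1) * (11*t^4 + 22*t^3 + 9*t^2 - 2*t + 5) = 0 := by
        rw [← hfac, mul_eq_zero, or_iff_right (by norm_num)]
    _ ↔ 2*t^2 + 2*t - 1 = 0 := mul_eq_zero.trans (or_iff_left (hquartic t))
    _ ↔ _ := two_mul_sq_add_two_mul_sub_one_eq_zero_iff t
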